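/- Let X = ℚ ∩ [0,1] and let g ∈ F₀ with E₀(g, g) > 0. Then there exists no nonnegative measure Γ on X (with the σ-algebra of all subsets of the countable set X) such that for every ψ ∈ F₀ the restriction ψ|_X is Γ-integrable and 2 ∫_X ψ|_X dΓ = 2 E₀(ψg, g) − E₀(ψ, g²). In other words, the Dirichlet form obtained by restricting the classical Dirichlet integral on [0,1] to the countable state space ℚ ∩ [0,1] does not admit an energy measure for any function of positive energy. -/

import Mathlib

open MeasureTheory intervalIntegral

/-- Membership in `F₀`, the domain of the classical Dirichlet integral on `[0,1]`:
`g ∈ F₀` with (weak) derivative `h` iff `h ∈ L²([0,1])` and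
`g x = g 0 + ∫_0^x h(t) dt` for all `x ∈ [0,1]`.  For `g₁, g₂ ∈ F₀` with derivatives
`h₁, h₂`, the Dirichlet integral is `E₀(g₁, g₂) = ∫_0^1 h₁ h₂ dt`. -/
def MemF0 (g h : ℝ → ℝ) : Prop :=
  MemLp h 2 (volume.restrict (Set.Icc (0 : ℝ) 1)) ∧
    ∀ x ∈ Set.Icc (0 : ℝ) 1, g x = g 0 + ∫ t in (0 : ℝ)..x, h t

/-- The countable state space `X = ℚ ∩ [0,1]`. -/
def QI : Type := {q : ℚ // (q : ℝ) ∈ Set.Icc (0 : ℝ) 1}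

/-!
If `Γ` were an energy measure for `g`, the cross terms `k g h` would cancel in
`2 E₀(ψ g, g) − E₀(ψ, g²)`, so that `∫ ψ dΓ = ∫₀¹ ψ h²` for every `ψ ∈ F₀`. Testing this against
a smooth bump equal to `1` at a rational point `q` and supported in the ball of radius `ε`
around `q` gives `Γ {q} ≤ ∫_{B(q, ε)} h²`, which tends to `0` with `ε`. So `Γ` has no atoms, and
being a measure on a countable set, it vanishes. But `ψ = 1` gives it total mass `E₀(g, g) > 0`.
-/

open Set Metric Filter Topology

theorem tendsto_setIntegral_closedBall_nhdsGT_zero {α E : Type*} [MetricSpace α]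
    [MeasurableSpace α] [OpensMeasurableSpace α] [NormedAddCommGroup E] [NormedSpace ℝ E]
    {μ : Measure α} [IsFiniteMeasure μ] {f : α → E} (hf : Integrable f μ) {x : α}
    (hx : μ {x} = 0) :
    Tendsto (fun r => ∫ t in closedBall x r, f t ∂μ) (𝓝[>] 0) (𝓝 0) := by
  refine hf.tendsto_setIntegral_nhds_zero ?_
  have := tendsto_measure_biInter_gt (μ := μ) (s := closedBall x) (a := 0)
    (fun r _ => measurableSet_closedBall.nullMeasurableSet)
    (fun _ _ _ hrs => closedBall_subset_closedBall hrs) ⟨1, one_pos, measure_ne_top μ _⟩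
  rwa [biInter_gt_closedBall, closedBall_zero, hx] at this

theorem ContDiffBump.integral_mul_le_setIntegral_closedBall {E : Type*} [NormedAddCommGroup E]
    [NormedSpace ℝ E] [HasContDiffBump E] [MeasurableSpace E] [OpensMeasurableSpace E]
    {c : E} (φ : ContDiffBump c) {μ : Measure E} {w : E → ℝ} (hw : Integrable w μ)
    (hw0 : 0 ≤ w) :
    ∫ t, φ t * w t ∂μ ≤ ∫ t in closedBall c φ.rOut, w t ∂μ := by
  rw [← MeasureTheory.integral_indicator measurableSet_closedBall]
  refine integral_mono_of_nonneg (ae_of_all _ fun t => mul_nonneg φ.nonneg (hw0 t))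
    (hw.indicator measurableSet_closedBall) (ae_of_all _ fun t => ?_)
  dsimp only
  by_cases ht : t ∈ closedBall c φ.rOut
  · rw [indicator_of_mem ht]
    exact mul_le_of_le_one_left (hw0 t) φ.le_one
  · rw [indicator_of_notMem ht, φ.zero_of_le_dist (le_of_lt (by simpa using ht)), zero_mul]

theorem measureReal_singleton_mul_le_integral {α : Type*} [MeasurableSpace α]
    [MeasurableSingletonClass α] {μ : Measure α} {f : α → ℝ} (hf : Integrable f μ)
    (hf0 : 0 ≤ f) (a : α) :
    μ.real {a} * f a ≤ ∫ x, f x ∂μ := by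
  rw [← smul_eq_mul, ← integral_singleton]
  exact setIntegral_le_integral hf (ae_of_all _ hf0)

theorem measureReal_singleton_eq_zero_of_integral_bump_eq {α E : Type*} [MeasurableSpace α]
    [MeasurableSingletonClass α] [NormedAddCommGroup E] [NormedSpace ℝ E] [HasContDiffBump E]
    [MeasurableSpace E] [OpensMeasurableSpace E] {Γ : Measure α} {e : α → E} {μ : Measure E}
    [IsFiniteMeasure μ] [NullSingletonClass μ] {w : E → ℝ} (hw : Integrable w μ) (hw0 : 0 ≤ w)
    (hΓ : ∀ (x : E) (φ : ContDiffBump x),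
      Integrable (fun a => φ (e a)) Γ ∧ ∫ a, φ (e a) ∂Γ = ∫ t, φ t * w t ∂μ)
    (a : α) :
    Γ.real {a} = 0 := by
  by_contra hne
  have hpos : 0 < Γ.real {a} := lt_of_le_of_ne measureReal_nonneg (Ne.symm hne)
  obtain ⟨ε, hsmall, hε⟩ := (((tendsto_setIntegral_closedBall_nhdsGT_zero hw
    (measure_singleton (e a))).eventually (gt_mem_nhds hpos)).and self_mem_nhdsWithin).exists
  let φ : ContDiffBump (e a) := ⟨ε / 2, ε, half_pos hε, half_lt_self hε⟩
  obtain ⟨hφint, hφeq⟩ := hΓ (e a) φ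
  have hφa : φ (e a) = 1 := φ.one_of_mem_closedBall (mem_closedBall_self φ.rIn_pos.le)
  refine lt_irrefl (Γ.real {a}) ?_
  calc Γ.real {a} = Γ.real {a} * φ (e a) := by rw [hφa, mul_one]
    _ ≤ ∫ t, φ t * w t ∂μ :=
      hφeq ▸ measureReal_singleton_mul_le_integral hφint (fun _ => φ.nonneg) a
    _ ≤ ∫ t in closedBall (e a) ε, w t ∂μ := φ.integral_mul_le_setIntegral_closedBall hw hw0
    _ < Γ.real {a} := hsmall

theorem MemF0.continuousOn {g h : ℝ → ℝ} (hg : MemF0 g h) : ContinuousOn g (Icc 0 1) := by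
  have hh : IntegrableOn h (uIcc 0 1) := by
    rw [uIcc_of_le zero_le_one]
    exact hg.1.integrable one_le_two
  have := (continuousOn_primitive_interval hh).const_add (g 0)
  rw [uIcc_of_le zero_le_one] at this
  exact this.congr hg.2

theorem memF0_of_contDiff {f : ℝ → ℝ} (hf : ContDiff ℝ 1 f) : MemF0 f (deriv f) := by
  have hf' : Continuous (deriv f) := hf.continuous_deriv le_rfl
  refine ⟨?_, fun x _ => ?_⟩
  · obtain ⟨C, hC⟩ := isCompact_Icc.exists_bound_of_continuousOn hf'.continuousOn
    exact MemLp.of_bound hf'.aestronglyMeasurable.restrict C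
      (ae_restrict_of_forall_mem measurableSet_Icc hC)
  · rw [integral_deriv_eq_sub (fun y _ => (hf.differentiable one_ne_zero).differentiableAt)
      (hf'.intervalIntegrable 0 x)]
    ring

theorem MemF0.energy_identity {g h ψ k : ℝ → ℝ} (hg : MemF0 g h) (hψ : MemF0 ψ k) :
    2 * (∫ t in (0 : ℝ)..1, (k t * g t + ψ t * h t) * h t) -
        ∫ t in (0 : ℝ)..1, k t * (2 * g t * h t) =
      2 * ∫ t in (0 : ℝ)..1, ψ t * h t ^ 2 := by
  have hkgh : IntervalIntegrable (fun t => g t * (k t * h t)) volume 0 1 := by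
    refine IntegrableOn.intervalIntegrable ?_
    rw [uIcc_of_le zero_le_one]
    exact IntegrableOn.continuousOn_mul hg.continuousOn (hψ.1.integrable_mul hg.1) isCompact_Icc
  have hψhh : IntervalIntegrable (fun t => ψ t * h t ^ 2) volume 0 1 := by
    refine IntegrableOn.intervalIntegrable ?_
    rw [uIcc_of_le zero_le_one]
    exact IntegrableOn.continuousOn_mul hψ.continuousOn hg.1.integrable_sq isCompact_Icc
  have e₁ : (fun t => (k t * g t + ψ t * h t) * h t) =
      fun t => g t * (k t * h t) + ψ t * h t ^ 2 := by
    ext t; ring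
  have e₂ : (fun t => k t * (2 * g t * h t)) = fun t => 2 * (g t * (k t * h t)) := by
    ext t; ring
  rw [e₁, e₂, integral_add hkgh hψhh, intervalIntegral.integral_const_mul]
  ring

instance : Countable QI := inferInstanceAs (Countable {q : ℚ // (q : ℝ) ∈ Icc (0 : ℝ) 1})

/-- Let `X = ℚ ∩ [0,1]` and let `g ∈ F₀` (with derivative `h`) have
positive energy `E₀(g, g) = ∫_0^1 h² dt > 0`.  Then there is no nonnegative measure `Γ`
on `X` (with the σ-algebra of all subsets of the countable set `X`) such that for every
`ψ ∈ F₀` (with derivative `k`) the restriction `ψ|_X` is `Γ`-integrable and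
`2 ∫_X ψ|_X dΓ = 2 E₀(ψ g, g) − E₀(ψ, g²)`, where `(ψ g)' = k g + ψ h` and
`(g²)' = 2 g h`: the restricted Dirichlet form admits no energy measure for any function
of positive energy. -/
theorem no_energy_measure_on_rationals (g h : ℝ → ℝ) (hg : MemF0 g h)
    (hpos : 0 < ∫ t in (0 : ℝ)..1, h t ^ 2) :
    ¬ ∃ Γ : @Measure QI ⊤, ∀ ψ k : ℝ → ℝ, MemF0 ψ k →
        Integrable (fun q : QI => ψ (q.1 : ℝ)) Γ ∧
        2 * ∫ q : QI, ψ (q.1 : ℝ) ∂Γ =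
          2 * (∫ t in (0 : ℝ)..1, (k t * g t + ψ t * h t) * h t) -
            ∫ t in (0 : ℝ)..1, k t * (2 * g t * h t) := by
  let _ : MeasurableSpace QI := ⊤
  rintro ⟨Γ, hΓ⟩
  have hrep : ∀ ψ k, MemF0 ψ k → Integrable (fun q : QI => ψ (q.1 : ℝ)) Γ ∧
      ∫ q : QI, ψ (q.1 : ℝ) ∂Γ = ∫ t in Ioc (0 : ℝ) 1, ψ t * h t ^ 2 := by
    intro ψ k hψ
    obtain ⟨hint, heq⟩ := hΓ ψ k hψ
    rw [hg.energy_identity hψ, integral_of_le zero_le_one] at heq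
    exact ⟨hint, by linarith⟩
  have hw : Integrable (fun t => h t ^ 2) (volume.restrict (Ioc (0 : ℝ) 1)) :=
    hg.1.integrable_sq.mono_measure (Measure.restrict_mono Ioc_subset_Icc_self le_rfl)
  have hatom : ∀ q, Γ.real {q} = 0 :=
    measureReal_singleton_eq_zero_of_integral_bump_eq (e := fun q : QI => (q.1 : ℝ)) hw
      (fun t => sq_nonneg (h t)) fun _ φ => hrep φ (deriv φ) (memF0_of_contDiff φ.contDiff)
  obtain ⟨hint, hmass⟩ := hrep _ _ (memF0_of_contDiff (contDiff_const (c := (1 : ℝ))))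
  have : IsFiniteMeasure Γ := (integrable_const_iff.1 hint).resolve_left one_ne_zero
  have : NullSingletonClass Γ := ⟨fun q => (measureReal_eq_zero_iff).1 (hatom q)⟩
  have hzero : Γ univ = 0 := countable_univ.measure_zero Γ
  exact hpos.ne (by simpa [measureReal_def, hzero, integral_of_le zero_le_one] using hmass)
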